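/- Let n ≥ 3 and let C_n be the cycle graph on n vertices, with edge ideal I(C_n) ⊆ R = k[x_0, …, x_{n−1}]. Then R/I(C_n) is rigid (δ* is surjective, i.e. T^1(R/I(C_n)) = 0) if and only if n = 4 or n = 6. -/

import Mathlib

open MvPolynomial

noncomputable section

/-- The edge ideal of the (possibly non-simple) graph on `V` given by the
symmetric relation `E`: the ideal generated by the monomials `X a * X b`
over all pairs `(a, b)` with `E a b`. -/
def edgeIdeal (k : Type*) [Field k] {V : Type*} (E : V → V → Prop) :
    Ideal (MvPolynomial V k) :=
  Ideal.span {m | ∃ a b, E a b ∧ m = X a * X b}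

/-- The generator `X u * X v` of the edge ideal, as an element of the ideal. -/
def edgeGen (k : Type*) [Field k] {V : Type*} (E : V → V → Prop) (u v : V) (h : E u v) :
    edgeIdeal k E :=
  ⟨X u * X v, Ideal.subset_span ⟨u, v, h, rfl⟩⟩

/-- `φ : I → R/I` is a trivial first-order deformation: it lies in the image of `δ*`,
i.e. it is induced by a `k`-derivation of `R`. -/
def IsTrivialDef (k : Type*) [Field k] {V : Type*} (E : V → V → Prop)
    (φ : edgeIdeal k E →ₗ[MvPolynomial V k] MvPolynomial V k ⧸ edgeIdeal k E) : Prop :=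
  ∃ d : Derivation k (MvPolynomial V k) (MvPolynomial V k),
    ∀ f : edgeIdeal k E, φ f = Ideal.Quotient.mk (edgeIdeal k E) (d f)

/-- `R/I(G)` is rigid: `δ*` is surjective, i.e. `T¹(R/I) = 0`. -/
def RigidEdgeIdeal (k : Type*) [Field k] {V : Type*} (E : V → V → Prop) : Prop :=
  ∀ φ : edgeIdeal k E →ₗ[MvPolynomial V k] MvPolynomial V k ⧸ edgeIdeal k E,
    IsTrivialDef k E φ

open scoped Classical in
/-- The neighborhood of a vertex. -/
def nbhd {V : Type*} [Fintype V] (E : V → V → Prop) (v : V) : Finset V :=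
  Finset.univ.filter (fun w => E v w)

open scoped Classical in
/-- The set `Λ_{ab}` of squarefree monomials `√(∏_{g ∈ Λ} x_{c g})` over all choice
functions `c` with `c g ∈ Λ_g = N(g) \ {a,b}` for every `g ∈ Λ = (N(a)\{b}) ∪ (N(b)\{a})`. -/
def LambdaSet (k : Type*) [Field k] {V : Type*} [Fintype V] [DecidableEq V]
    (E : V → V → Prop) (a b : V) : Set (MvPolynomial V k) :=
  {m | ∃ c : V → V,
    (∀ g ∈ (nbhd E a).erase b ∪ (nbhd E b).erase a, c g ∈ nbhd E g \ {a, b}) ∧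
    m = ∏ v ∈ ((nbhd E a).erase b ∪ (nbhd E b).erase a).image c, X v}

/-- `φ` is the type I map `φ^λ_{ab}` : it sends the generator `x_a x_b` to `λ` and every
other minimal monomial generator of the edge ideal to `0`. -/
def IsTypeI (k : Type*) [Field k] {V : Type*} (E : V → V → Prop) (a b : V) (hab : E a b)
    (lam : MvPolynomial V k)
    (φ : edgeIdeal k E →ₗ[MvPolynomial V k] MvPolynomial V k ⧸ edgeIdeal k E) : Prop :=
  φ (edgeGen k E a b hab) = Ideal.Quotient.mk (edgeIdeal k E) lam ∧
  ∀ u v (h : E u v), X u * X v ≠ (X a * X b : MvPolynomial V k) →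
    φ (edgeGen k E u v h) = 0

open scoped Classical in
/-- `Γ(L)`: the vertices of `N̄(a)` not in `L` that are adjacent in `N̄(a)`
(the complement of the underlying simple graph induced on `N(a)`) to some vertex of `L`. -/
def GammaF {V : Type*} [Fintype V] [DecidableEq V] (E : V → V → Prop) (a : V)
    (L : Finset V) : Finset V :=
  (nbhd E a \ L).filter (fun g => ∃ u ∈ L, u ≠ g ∧ ¬ E u g)

open scoped Classical in
/-- The set `Γ_{a,L}` of squarefree monomials `√(∏_{g ∈ Γ(L)} x_{c g})` over all choice
functions `c` with `c g ∈ Γ_g = N(g) \ {a}`. -/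
def GammaSet (k : Type*) [Field k] {V : Type*} [Fintype V] [DecidableEq V]
    (E : V → V → Prop) (a : V) (L : Finset V) : Set (MvPolynomial V k) :=
  {m | ∃ c : V → V,
    (∀ g ∈ GammaF E a L, c g ∈ (nbhd E g).erase a) ∧
    m = ∏ v ∈ (GammaF E a L).image c, X v}

/-- `φ` is the type II map `φ^λ_{a,L}` : it sends the generator `x_a x_u` to `λ·x_u`
for `u ∈ L` and every other minimal monomial generator of the edge ideal to `0`. -/
def IsTypeII (k : Type*) [Field k] {V : Type*} (E : V → V → Prop) (a : V) (L : Finset V)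
    (lam : MvPolynomial V k)
    (φ : edgeIdeal k E →ₗ[MvPolynomial V k] MvPolynomial V k ⧸ edgeIdeal k E) : Prop :=
  (∀ u ∈ L, ∀ h : E a u, φ (edgeGen k E a u h) =
      Ideal.Quotient.mk (edgeIdeal k E) (lam * X u)) ∧
  ∀ u v (h : E u v), (∀ x ∈ L, X u * X v ≠ (X a * X x : MvPolynomial V k)) →
    φ (edgeGen k E u v h) = 0

namespace Aux17

def Ecyc (n : ℕ) : ZMod n → ZMod n → Prop := fun i j => j = i + 1 ∨ i = j + 1

variable {k : Type*} [Field k] {n : ℕ}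

abbrev Rp (k : Type*) [Field k] (n : ℕ) := MvPolynomial (ZMod n) k

def sE (i : ZMod n) : ZMod n →₀ ℕ := Finsupp.single i 1

def eE (i : ZMod n) : ZMod n →₀ ℕ := Finsupp.single i 1 + Finsupp.single (i + 1) 1

/-- standard exponent: not divisible by any edge monomial -/
def Std (d : ZMod n →₀ ℕ) : Prop := ∀ j : ZMod n, ¬ eE j ≤ d

lemma X_mul_X (a b : ZMod n) :
    (X a * X b : Rp k n) = monomial (Finsupp.single a 1 + Finsupp.single b 1) 1 := by
  rw [X, X, monomial_mul, one_mul]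

lemma eE_apply (i t : ZMod n) :
    eE i t = (if i = t then 1 else 0) + (if i + 1 = t then 1 else 0) := by
  simp [eE, Finsupp.single_apply]

lemma sE_apply (i t : ZMod n) : sE i t = if i = t then 1 else 0 := by
  simp [sE, Finsupp.single_apply]

lemma le_eE_iff (h1 : (1 : ZMod n) ≠ 0) {j : ZMod n} {d : ZMod n →₀ ℕ} :
    eE j ≤ d ↔ 1 ≤ d j ∧ 1 ≤ d (j + 1) := by
  have hne : j ≠ j + 1 := fun h => h1 (by simpa using (left_eq_add.mp h))
  constructor
  · intro h
    rw [Finsupp.le_def] at h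
    constructor
    · have h' := h j
      rw [eE_apply] at h'
      simpa [Ne.symm hne] using h'
    · have h' := h (j + 1)
      rw [eE_apply] at h'
      simpa [hne] using h'
  · rintro ⟨ha, hb⟩
    rw [Finsupp.le_def]
    intro t
    rw [eE_apply]
    rcases eq_or_ne j t with rfl | hjt
    · simpa [Ne.symm hne] using ha
    · rcases eq_or_ne (j + 1) t with rfl | hjt1
      · simpa [hne] using hb
      · simp [if_neg hjt, if_neg hjt1]

lemma gen_mem (j : ZMod n) : (X j * X (j + 1) : Rp k n) ∈ edgeIdeal k (Ecyc n) :=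
  Ideal.subset_span ⟨j, j + 1, Or.inl rfl, rfl⟩

lemma monomial_mem {d : ZMod n →₀ ℕ} (c : k) {j : ZMod n} (h : eE j ≤ d) :
    (monomial d c : Rp k n) ∈ edgeIdeal k (Ecyc n) := by
  have he : (monomial d c : Rp k n) = monomial (d - eE j) c * (X j * X (j + 1)) := by
    rw [X_mul_X, monomial_mul, mul_one,
      show (Finsupp.single j 1 + Finsupp.single (j + 1) 1) = eE j from rfl,
      tsub_add_cancel_of_le h]
  rw [he]
  exact Ideal.mul_mem_left _ _ (gen_mem j)

lemma mem_of_supp {f : Rp k n} (hf : ∀ d ∈ f.support, ∃ j, eE j ≤ d) :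
    f ∈ edgeIdeal k (Ecyc n) := by
  rw [as_sum f]
  exact Ideal.sum_mem _ fun d hd => (hf d hd).elim fun j hj => monomial_mem _ hj

lemma supp_of_mem {f : Rp k n} (hf : f ∈ edgeIdeal k (Ecyc n)) :
    ∀ d ∈ f.support, ∃ j, eE j ≤ d := by
  classical
  let J : Ideal (Rp k n) :=
    { carrier := {f | ∀ d ∈ f.support, ∃ j, eE j ≤ d}
      add_mem' := by
        intro a b ha hb d hd
        rcases Finset.mem_union.mp (MvPolynomial.support_add hd) with h | h
        · exact ha d h
        · exact hb d h
      zero_mem' := by simp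
      smul_mem' := by
        intro r f hf d hd
        rw [smul_eq_mul] at hd
        obtain ⟨a, ha, b, hb, rfl⟩ := Finset.mem_add.mp (MvPolynomial.support_mul r f hd)
        obtain ⟨j, hj⟩ := hf b hb
        exact ⟨j, hj.trans le_add_self⟩ }
  have hle : edgeIdeal k (Ecyc n) ≤ J := by
    rw [edgeIdeal, Ideal.span_le]
    rintro m ⟨a, b, hab, rfl⟩
    intro d hd
    rw [X_mul_X] at hd
    rw [MvPolynomial.support_monomial, if_neg (one_ne_zero (α := k))] at hd
    rw [Finset.mem_singleton] at hd
    subst hd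
    rcases hab with h | h
    · exact ⟨a, by rw [eE, ← h]⟩
    · exact ⟨b, by rw [eE, ← h, add_comm (Finsupp.single b 1)]⟩
  exact hle hf

lemma coeff_std_zero {f : Rp k n} (hf : f ∈ edgeIdeal k (Ecyc n)) {d : ZMod n →₀ ℕ}
    (hd : Std d) : coeff d f = 0 := by
  by_contra hc
  obtain ⟨j, hj⟩ := supp_of_mem hf d (mem_support_iff.mpr hc)
  exact hd j hj

end Aux17


namespace Aux17

variable {k : Type*} [Field k] {n : ℕ}

open scoped Classical in
/-- the part of `f` with exponents satisfying `P` -/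
def selP (P : (ZMod n →₀ ℕ) → Prop) (f : Rp k n) : Rp k n :=
  ∑ d ∈ f.support, if P d then monomial d (coeff d f) else 0

open scoped Classical in
/-- the part of `f` divisible by `x_j`, divided by `x_j` -/
def divP (j : ZMod n) (f : Rp k n) : Rp k n :=
  ∑ d ∈ f.support, if d j ≠ 0 then monomial (d - sE j) (coeff d f) else 0

open scoped Classical in
lemma coeff_selP (P : (ZMod n →₀ ℕ) → Prop) (f : Rp k n) (d : ZMod n →₀ ℕ) :
    coeff d (selP P f) = if P d then coeff d f else 0 := by
  rw [selP, coeff_sum]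
  rw [Finset.sum_eq_single d]
  · split_ifs with h <;> simp [coeff_monomial]
  · intro b _ hbd
    split_ifs with h
    · rw [coeff_monomial, if_neg hbd]
    · simp
  · intro hd
    rw [notMem_support_iff] at hd
    split_ifs with h <;> simp [hd, coeff_monomial]

open scoped Classical in
lemma coeff_divP (j : ZMod n) (f : Rp k n) (d : ZMod n →₀ ℕ) :
    coeff d (divP j f) = coeff (d + sE j) f := by
  have hkey : ∀ b : ZMod n →₀ ℕ, b j ≠ 0 → b - sE j = d →
      b = d + sE j := by
    intro b hb he
    have hle : sE j ≤ b :=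
      Finsupp.single_le_iff.mpr (Nat.one_le_iff_ne_zero.mpr hb)
    rw [← he, tsub_add_cancel_of_le hle]
  set D : ZMod n →₀ ℕ := d + sE j with hDdef
  have h1 : D j ≠ 0 := by
    simp [hDdef, sE, Finsupp.add_apply, Finsupp.single_apply]
  rw [divP, coeff_sum]
  rw [Finset.sum_eq_single D]
  · rw [if_pos h1, hDdef, add_tsub_cancel_right, coeff_monomial, if_pos rfl]
  · intro b _ hbd
    split_ifs with h
    · rw [coeff_monomial]
      rw [if_neg]
      intro he
      exact hbd (hkey b h he)
    · simp
  · intro hd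
    rw [notMem_support_iff] at hd
    rw [if_pos h1, hDdef, add_tsub_cancel_right, coeff_monomial, if_pos rfl]
    rw [← hDdef, hd]

open scoped Classical in
lemma split_div (j : ZMod n) (f : Rp k n) :
    f = X j * divP j f + selP (fun d => d j = 0) f := by
  ext d
  rw [coeff_add, coeff_X_mul', coeff_selP]
  by_cases h : d j = 0
  · rw [if_neg (by simp [Finsupp.mem_support_iff, h]), if_pos h, zero_add]
  · have hj : j ∈ d.support := by simpa [Finsupp.mem_support_iff] using h
    rw [if_pos hj, if_neg h, add_zero, coeff_divP]
    congr 1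
    show d = d - sE j + sE j
    exact (tsub_add_cancel_of_le
      (Finsupp.single_le_iff.mpr (Nat.one_le_iff_ne_zero.mpr h))).symm

open scoped Classical in
lemma split_sel (P : (ZMod n →₀ ℕ) → Prop) (f : Rp k n) :
    f = selP P f + selP (fun d => ¬ P d) f := by
  ext d
  rw [coeff_add, coeff_selP, coeff_selP]
  split_ifs with h <;> simp

lemma supp_selP {P : (ZMod n →₀ ℕ) → Prop} {f : Rp k n} {d : ZMod n →₀ ℕ}
    (h : d ∈ (selP P f).support) : P d ∧ d ∈ f.support := by
  classical
  rw [mem_support_iff] at h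
  rw [coeff_selP] at h
  by_cases hP : P d
  · exact ⟨hP, mem_support_iff.mpr (by rwa [if_pos hP] at h)⟩
  · rw [if_neg hP] at h
    exact absurd rfl h

lemma supp_divP {j : ZMod n} {f : Rp k n} {d : ZMod n →₀ ℕ}
    (h : d ∈ (divP j f).support) : d + sE j ∈ f.support := by
  rw [mem_support_iff] at h ⊢
  rwa [coeff_divP] at h

end Aux17


namespace Aux17

variable {k : Type*} [Field k] {n : ℕ}

lemma coeff_X_mul_self (j : ZMod n) (g : Rp k n) (d : ZMod n →₀ ℕ) :
    coeff (d + sE j) (X j * g) = coeff d g := by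
  classical
  rw [coeff_X_mul', if_pos (by simp [Finsupp.mem_support_iff, Finsupp.add_apply, sE_apply])]
  congr 1
  ext a
  simp only [Finsupp.tsub_apply, Finsupp.add_apply, sE_apply, Finsupp.single_apply]
  split_ifs <;> omega

lemma coeff_X_mul_zero {t : ZMod n} {D : ZMod n →₀ ℕ} (g : Rp k n) (h : D t = 0) :
    coeff D (X t * g) = 0 := by
  classical
  rw [coeff_X_mul', if_neg (by simp [Finsupp.mem_support_iff, h])]

lemma z146 (h46 : n = 4 ∨ n = 6) : (1 : ZMod n) ≠ 0 := by
  rcases h46 with rfl | rfl <;> decide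

lemma z246 (h46 : n = 4 ∨ n = 6) : (2 : ZMod n) ≠ 0 := by
  rcases h46 with rfl | rfl <;> decide

lemma z346 (h46 : n = 4 ∨ n = 6) : (3 : ZMod n) ≠ 0 := by
  rcases h46 with rfl | rfl <;> decide

lemma bump (h1 : (1 : ZMod n) ≠ 0) {d : ZMod n →₀ ℕ} {t j : ZMod n} (hd : Std d)
    (h : eE j ≤ d + sE t) : (t = j ∧ 1 ≤ d (j + 1)) ∨ (t = j + 1 ∧ 1 ≤ d j) := by
  rw [le_eE_iff h1] at h
  obtain ⟨hj, hj1⟩ := h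
  have ha : 1 ≤ d j + (if t = j then 1 else 0) := by
    rwa [Finsupp.add_apply, sE_apply] at hj
  have hb : 1 ≤ d (j + 1) + (if t = j + 1 then 1 else 0) := by
    rwa [Finsupp.add_apply, sE_apply] at hj1
  have hnd : ¬ (1 ≤ d j ∧ 1 ≤ d (j + 1)) := fun hc => hd j ((le_eE_iff h1).mpr hc)
  by_cases hdj : 1 ≤ d j
  · have hdj1 : ¬ 1 ≤ d (j + 1) := fun hc => hnd ⟨hdj, hc⟩
    rcases eq_or_ne t (j + 1) with rfl | hne
    · exact Or.inr ⟨rfl, hdj⟩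
    · rw [if_neg hne] at hb
      omega
  · rcases eq_or_ne t j with h | hne
    · have hne' : t ≠ j + 1 := by
        rw [h]
        exact fun hh => h1 (by simpa using (left_eq_add.mp hh))
      rw [if_neg hne'] at hb
      exact Or.inl ⟨h, by omega⟩
    · rw [if_neg hne] at ha
      omega

lemma containsOr (h46 : n = 4 ∨ n = 6) (w : ZMod n → Rp k n)
    (hstd : ∀ i, ∀ d ∈ (w i).support, Std d)
    (hrel : ∀ i, X (i + 2) * w i - X i * w (i + 1) ∈ edgeIdeal k (Ecyc n)) :
    ∀ i, ∀ d ∈ (w i).support, d i ≠ 0 ∨ d (i + 1) ≠ 0 := by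
  have h1 := z146 h46; have h2 := z246 h46; have h3 := z346 h46
  intro i d hd
  by_contra hc
  push_neg at hc
  obtain ⟨hi0, hi10⟩ := hc
  have hdstd := hstd i d hd
  have hcoeff : coeff d (w i) ≠ 0 := mem_support_iff.mp hd
  have hD1 : ∃ j, eE j ≤ d + sE (i + 2) := by
    by_contra hD
    push_neg at hD
    have h0 : coeff (d + sE (i + 2)) (X (i + 2) * w i - X i * w (i + 1)) = 0 :=
      coeff_std_zero (hrel i) hD
    have c1 : coeff (d + sE (i + 2)) (X (i + 2) * w i) = coeff d (w i) :=
      coeff_X_mul_self _ _ _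
    have c2 : coeff (d + sE (i + 2)) (X i * w (i + 1)) = 0 := by
      refine coeff_X_mul_zero _ ?_
      rw [Finsupp.add_apply, sE_apply, hi0,
        if_neg (fun h : i + 2 = i => h2 (by rwa [add_eq_left] at h))]
    rw [coeff_sub, c1, c2, sub_zero] at h0
    exact hcoeff h0
  obtain ⟨j, hj⟩ := hD1
  have h3' : 1 ≤ d (i + 3) := by
    rcases bump h1 hdstd hj with ⟨hji, hle⟩ | ⟨hji, hle⟩
    · rw [← hji, show i + 2 + 1 = i + 3 from by ring] at hle
      exact hle
    · have hjeq : j = i + 1 := by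
        have h' : j + 1 = (i + 1) + 1 := by rw [← hji]; ring
        exact add_right_cancel h'
      rw [hjeq] at hle
      omega
  have hrel2 := hrel (i - 1)
  rw [show i - 1 + 2 = i + 1 from by ring, show i - 1 + 1 = i from by ring] at hrel2
  have hD2 : ∃ j, eE j ≤ d + sE (i - 1) := by
    by_contra hD
    push_neg at hD
    have h0 : coeff (d + sE (i - 1)) (X (i + 1) * w (i - 1) - X (i - 1) * w i) = 0 :=
      coeff_std_zero hrel2 hD
    have c1 : coeff (d + sE (i - 1)) (X (i - 1) * w i) = coeff d (w i) :=
      coeff_X_mul_self _ _ _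
    have c2 : coeff (d + sE (i - 1)) (X (i + 1) * w (i - 1)) = 0 := by
      refine coeff_X_mul_zero _ ?_
      rw [Finsupp.add_apply, sE_apply, hi10,
        if_neg (fun h : i - 1 = i + 1 => h2 (by linear_combination -h))]
    rw [coeff_sub, c2, c1, zero_sub, neg_eq_zero] at h0
    exact hcoeff h0
  obtain ⟨j2, hj2⟩ := hD2
  have h4' : 1 ≤ d (i - 2) := by
    rcases bump h1 hdstd hj2 with ⟨hji, hle⟩ | ⟨hji, hle⟩
    · rw [← hji, show i - 1 + 1 = i from by ring] at hle
      omega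
    · have hjeq : j2 = i - 2 := by
        have h' : j2 + 1 = (i - 2) + 1 := by
          rw [show (i - 2) + 1 = i - 1 from by ring, ← hji]
        exact add_right_cancel h'
      rwa [hjeq] at hle
  rcases h46 with rfl | rfl
  · have hA : i - 2 = i + 2 := by
      have h' : (-2 : ZMod 4) = 2 := by decide
      rw [sub_eq_add_neg, h']
    refine hdstd (i + 2) ((le_eE_iff h1).mpr ⟨?_, ?_⟩)
    · rwa [hA] at h4'
    · rwa [show i + 2 + 1 = i + 3 from by ring]
  · have hA : i - 2 = i + 4 := by
      have h' : (-2 : ZMod 6) = 4 := by decide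
      rw [sub_eq_add_neg, h']
    refine hdstd (i + 3) ((le_eE_iff h1).mpr ⟨h3', ?_⟩)
    rw [show i + 3 + 1 = i + 4 from by ring, ← hA]
    exact h4'

def Aw (w : ZMod n → Rp k n) (i : ZMod n) : Rp k n := divP i (w i)

def Bw (w : ZMod n → Rp k n) (i : ZMod n) : Rp k n :=
  divP (i + 1) (selP (fun d => d i = 0) (w i))

def Cw (w : ZMod n → Rp k n) (i : ZMod n) : Rp k n := divP (i + 3) (Aw w i)

def A'w (w : ZMod n → Rp k n) (i : ZMod n) : Rp k n :=
  selP (fun d => d (i + 3) = 0) (Aw w i)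

def Ew (w : ZMod n → Rp k n) (i : ZMod n) : Rp k n := divP (i - 1) (Bw w (i + 1))

def B'w (w : ZMod n → Rp k n) (i : ZMod n) : Rp k n :=
  selP (fun d => d (i - 1) = 0) (Bw w (i + 1))

lemma decomp (h46 : n = 4 ∨ n = 6) (w : ZMod n → Rp k n)
    (hstd : ∀ i, ∀ d ∈ (w i).support, Std d)
    (hrel : ∀ i, X (i + 2) * w i - X i * w (i + 1) ∈ edgeIdeal k (Ecyc n)) (i : ZMod n) :
    w i = X i * Aw w i + X (i + 1) * Bw w i := by
  have hCO := containsOr h46 w hstd hrel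
  have h₁ := split_div i (w i)
  have h₂ := split_div (i + 1) (selP (fun d => d i = 0) (w i))
  have h₃ : selP (fun d => d (i + 1) = 0) (selP (fun d => d i = 0) (w i)) = 0 := by
    rw [eq_zero_iff]
    intro d
    rw [coeff_selP, coeff_selP]
    by_cases hA1 : d (i + 1) = 0
    · by_cases hB1 : d i = 0
      · rw [if_pos hA1, if_pos hB1]
        by_contra hc
        rcases hCO i d (mem_support_iff.mpr hc) with h | h
        exacts [h hB1, h hA1]
      · rw [if_pos hA1, if_neg hB1]
    · rw [if_neg hA1]
  conv_lhs => rw [h₁]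
  conv_lhs => rw [h₂]
  rw [h₃, add_zero]
  rfl

lemma matchAB (h46 : n = 4 ∨ n = 6) (w : ZMod n → Rp k n)
    (hstd : ∀ i, ∀ d ∈ (w i).support, Std d)
    (hrel : ∀ i, X (i + 2) * w i - X i * w (i + 1) ∈ edgeIdeal k (Ecyc n)) (i : ZMod n) :
    A'w w i = B'w w i := by
  have h1 := z146 h46; have h2 := z246 h46; have h3 := z346 h46
  have hA := decomp h46 w hstd hrel i
  have hB := decomp h46 w hstd hrel (i + 1)
  rw [show i + 1 + 1 = i + 2 from by ring] at hB
  have hsA : Aw w i = X (i + 3) * Cw w i + A'w w i := split_div (i + 3) (Aw w i)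
  have hsB : Bw w (i + 1) = X (i - 1) * Ew w i + B'w w i := split_div (i - 1) (Bw w (i + 1))
  rw [← sub_eq_zero]
  set g := A'w w i - B'w w i with hg
  have hmem : X i * (X (i + 2) * g) ∈ edgeIdeal k (Ecyc n) := by
    have hkey : X i * (X (i + 2) * g) =
        (X (i + 2) * w i - X i * w (i + 1))
          - (X (i + 1) * X (i + 2)) * Bw w i
          + (X i * X (i + 1)) * Aw w (i + 1)
          - (X (i + 2) * X (i + 3)) * (X i * Cw w i)
          + (X (i - 1) * X i) * (X (i + 2) * Ew w i) := by
      rw [hg, hA, hB, hsA, hsB]; ring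
    rw [hkey]
    refine Ideal.add_mem _ (Ideal.sub_mem _ (Ideal.add_mem _ (Ideal.sub_mem _ (hrel i) ?_) ?_) ?_) ?_
    · refine Ideal.mul_mem_right _ _ ?_
      have := gen_mem (k := k) (i + 1)
      rwa [show i + 1 + 1 = i + 2 from by ring] at this
    · exact Ideal.mul_mem_right _ _ (gen_mem i)
    · refine Ideal.mul_mem_right _ _ ?_
      have := gen_mem (k := k) (i + 2)
      rwa [show i + 2 + 1 = i + 3 from by ring] at this
    · refine Ideal.mul_mem_right _ _ ?_
      have := gen_mem (k := k) (i - 1)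
      rwa [show i - 1 + 1 = i from by ring] at this
  rw [eq_zero_iff]
  intro d
  by_contra hc
  have hstdD : Std (d + sE i + sE (i + 2)) := by
    have hcase : coeff d (A'w w i) ≠ 0 ∨ coeff d (B'w w i) ≠ 0 := by
      by_contra hcc
      push_neg at hcc
      exact hc (by rw [hg, coeff_sub, hcc.1, hcc.2, sub_zero])
    rcases hcase with hA' | hB'
    · obtain ⟨hd3, hdA⟩ := supp_selP (mem_support_iff.mpr hA')
      have hwsupp : d + sE i ∈ (w i).support := supp_divP hdA
      have hstd1 : Std (d + sE i) := hstd i _ hwsupp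
      intro j hj
      rcases bump h1 hstd1 hj with ⟨hji, hle⟩ | ⟨hji, hle⟩
      · rw [← hji, show i + 2 + 1 = i + 3 from by ring] at hle
        rw [Finsupp.add_apply, sE_apply, hd3,
          if_neg (fun h : i = i + 3 => h3 (left_eq_add.mp h))] at hle
        omega
      · have hjeq : j = i + 1 := by
          have h' : j + 1 = (i + 1) + 1 := by rw [← hji]; ring
          exact add_right_cancel h'
        rw [hjeq] at hle
        have hii1 : 1 ≤ (d + sE i) i := by
          rw [Finsupp.add_apply, sE_apply, if_pos rfl]
          omega
        exact hstd1 i ((le_eE_iff h1).mpr ⟨hii1, hle⟩)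
    · obtain ⟨hdm1, hdB⟩ := supp_selP (mem_support_iff.mpr hB')
      have hsupp2 := supp_divP hdB
      rw [show i + 1 + 1 = i + 2 from by ring] at hsupp2
      obtain ⟨hz, hws⟩ := supp_selP hsupp2
      have hstd2 : Std (d + sE (i + 2)) := hstd (i + 1) _ hws
      intro j hj
      rw [add_right_comm d (sE i) (sE (i + 2))] at hj
      rcases bump h1 hstd2 hj with ⟨hji, hle⟩ | ⟨hji, hle⟩
      · rw [← hji] at hle
        rw [hz] at hle
        omega
      · have hjeq : j = i - 1 := by rw [hji]; ring
        rw [hjeq] at hle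
        rw [Finsupp.add_apply, sE_apply, hdm1,
          if_neg (fun h : i + 2 = i - 1 => h3 (by linear_combination h))] at hle
        omega
  have hco : coeff (d + sE i + sE (i + 2)) (X i * (X (i + 2) * g)) = coeff d g := by
    rw [add_right_comm d (sE i) (sE (i + 2)), coeff_X_mul_self, coeff_X_mul_self]
  have h0 := coeff_std_zero hmem hstdD
  rw [hco] at h0
  exact hc h0

lemma key_exists (h46 : n = 4 ∨ n = 6) (w : ZMod n → Rp k n)
    (hstd : ∀ i, ∀ d ∈ (w i).support, Std d)
    (hrel : ∀ i, X (i + 2) * w i - X i * w (i + 1) ∈ edgeIdeal k (Ecyc n)) :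
    ∃ p : ZMod n → Rp k n,
      ∀ i, X (i + 1) * p i + X i * p (i + 1) - w i ∈ edgeIdeal k (Ecyc n) := by
  refine ⟨fun i => Bw w i + X (i + 2) * Cw w (i - 1), fun i => ?_⟩
  beta_reduce
  have hA := decomp h46 w hstd hrel i
  have hsA : Aw w i = X (i + 3) * Cw w i + A'w w i := split_div (i + 3) (Aw w i)
  have hsB : Bw w (i + 1) = X (i - 1) * Ew w i + B'w w i := split_div (i - 1) (Bw w (i + 1))
  have hm := matchAB h46 w hstd hrel i
  rw [show i + 1 + 2 = i + 3 from by ring, show i + 1 - 1 = i from by ring]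
  have hkey : X (i + 1) * (Bw w i + X (i + 2) * Cw w (i - 1))
        + X i * (Bw w (i + 1) + X (i + 3) * Cw w i) - w i
      = (X (i + 1) * X (i + 2)) * Cw w (i - 1) + (X (i - 1) * X i) * Ew w i := by
    rw [hA, hsA, hsB, hm]; ring
  rw [hkey]
  refine Ideal.add_mem _ (Ideal.mul_mem_right _ _ ?_) (Ideal.mul_mem_right _ _ ?_)
  · have := gen_mem (k := k) (i + 1)
    rwa [show i + 1 + 1 = i + 2 from by ring] at this
  · have := gen_mem (k := k) (i - 1)
    rwa [show i - 1 + 1 = i from by ring] at this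

end Aux17


namespace Aux17

variable {k : Type*} [Field k] {n : ℕ}

lemma mkq_smul (r x : Rp k n) :
    Ideal.Quotient.mk (edgeIdeal k (Ecyc n)) (r * x)
      = r • Ideal.Quotient.mk (edgeIdeal k (Ecyc n)) x := rfl

set_option synthInstance.maxHeartbeats 1000000 in
set_option maxHeartbeats 1000000 in
theorem rigid46 (h46 : n = 4 ∨ n = 6) : RigidEdgeIdeal k (Ecyc n) := by
  intro φ
  set u : ZMod n → (Rp k n ⧸ edgeIdeal k (Ecyc n)) :=
    fun i => φ (edgeGen k (Ecyc n) i (i + 1) (Or.inl rfl)) with hu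
  have hv : ∀ i, ∃ x, Ideal.Quotient.mk (edgeIdeal k (Ecyc n)) x = u i :=
    fun i => Ideal.Quotient.mk_surjective (u i)
  choose v hvQ using hv
  set w : ZMod n → Rp k n := fun i => selP Std (v i) with hw
  have hstd : ∀ i, ∀ d ∈ (w i).support, Std d := fun i d hd => (supp_selP hd).1
  have hwQ : ∀ i, Ideal.Quotient.mk (edgeIdeal k (Ecyc n)) (w i) = u i := by
    intro i
    have hmem : selP (fun d => ¬ Std d) (v i) ∈ edgeIdeal k (Ecyc n) := by
      apply mem_of_supp
      intro d hd
      have h' := (supp_selP hd).1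
      simp only [Std, not_forall, not_not] at h'
      exact h'
    have hvw : v i - w i = selP (fun d => ¬ Std d) (v i) := by
      have hs := split_sel Std (v i)
      simp only [hw]
      nth_rewrite 1 [hs]
      ring
    have heq : Ideal.Quotient.mk (edgeIdeal k (Ecyc n)) (v i)
        = Ideal.Quotient.mk (edgeIdeal k (Ecyc n)) (w i) := by
      rw [Ideal.Quotient.eq, hvw]
      exact hmem
    rw [← heq, hvQ]
  have hrel : ∀ i, X (i + 2) * w i - X i * w (i + 1) ∈ edgeIdeal k (Ecyc n) := by
    intro i
    have hE2 : Ecyc n (i + 1) (i + 2) := Or.inl (by ring)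
    have hgen : (X (i + 2) : Rp k n) • (edgeGen k (Ecyc n) i (i + 1) (Or.inl rfl))
        = (X i : Rp k n) • (edgeGen k (Ecyc n) (i + 1) (i + 2) hE2) := by
      apply Subtype.ext
      show (X (i + 2) : Rp k n) • (X i * X (i + 1)) = (X i : Rp k n) • (X (i + 1) * X (i + 2))
      rw [smul_eq_mul, smul_eq_mul]; ring
    have hgen2 : edgeGen k (Ecyc n) (i + 1) (i + 2) hE2
        = edgeGen k (Ecyc n) (i + 1) ((i + 1) + 1) (Or.inl rfl) := by
      apply Subtype.ext
      show (X (i + 1) * X (i + 2) : Rp k n) = X (i + 1) * X ((i + 1) + 1)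
      rw [show (i + 1) + 1 = i + 2 from by ring]
    have happ := congrArg φ hgen
    rw [map_smul, map_smul, hgen2] at happ
    rw [← Ideal.Quotient.eq]
    rw [mkq_smul, mkq_smul, hwQ, hwQ]
    exact happ
  obtain ⟨p, hp⟩ := key_exists h46 w hstd hrel
  refine ⟨mkDerivation k p, ?_⟩
  have hgen : ∀ (j : ZMod n) (hmem : (X j * X (j + 1) : Rp k n) ∈ edgeIdeal k (Ecyc n)),
      φ ⟨X j * X (j + 1), hmem⟩
        = Ideal.Quotient.mk (edgeIdeal k (Ecyc n)) ((mkDerivation k p) (X j * X (j + 1))) := by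
    intro j hmem
    have hval : (⟨X j * X (j + 1), hmem⟩ : edgeIdeal k (Ecyc n))
        = edgeGen k (Ecyc n) j (j + 1) (Or.inl rfl) := Subtype.ext rfl
    rw [hval]
    have hder : (mkDerivation k p) ((X j : Rp k n) * X (j + 1))
        = X j * p (j + 1) + X (j + 1) * p j := by
      rw [Derivation.leibniz, mkDerivation_X, mkDerivation_X, smul_eq_mul, smul_eq_mul]
    rw [hder]
    have hQeq : Ideal.Quotient.mk (edgeIdeal k (Ecyc n)) (X j * p (j + 1) + X (j + 1) * p j)
        = Ideal.Quotient.mk (edgeIdeal k (Ecyc n)) (w j) := by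
      rw [Ideal.Quotient.eq]
      have h' := hp j
      have heq : X j * p (j + 1) + X (j + 1) * p j - w j
          = X (j + 1) * p j + X j * p (j + 1) - w j := by ring
      rwa [← heq] at h'
    rw [hQeq, hwQ]
  have hgoal : ∀ (x : Rp k n) (hx : x ∈ edgeIdeal k (Ecyc n)),
      φ ⟨x, hx⟩ = Ideal.Quotient.mk (edgeIdeal k (Ecyc n)) ((mkDerivation k p) x) := by
    intro x hx
    refine Submodule.span_induction
      (p := fun x hx => φ ⟨x, hx⟩
        = Ideal.Quotient.mk (edgeIdeal k (Ecyc n)) ((mkDerivation k p) x)) ?_ ?_ ?_ ?_ hx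
    · rintro x ⟨a, b, hab, rfl⟩
      rcases hab with h | h
      · subst h
        exact hgen a _
      · subst h
        have hval : (⟨X (b + 1) * X b, Ideal.subset_span ⟨b + 1, b, Or.inr rfl, rfl⟩⟩ :
              edgeIdeal k (Ecyc n))
            = ⟨X b * X (b + 1), by
                have := Ideal.subset_span (α := Rp k n)
                  (s := {m | ∃ a b, Ecyc n a b ∧ m = X a * X b})
                  ⟨b + 1, b, Or.inr rfl, rfl⟩
                rwa [mul_comm] at this⟩ := Subtype.ext (mul_comm _ _)
        rw [hval]
        conv_rhs => rw [mul_comm (X (b + 1) : Rp k n) (X b)]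
        exact hgen b _
    · show φ 0 = Ideal.Quotient.mk (edgeIdeal k (Ecyc n)) ((mkDerivation k p) 0)
      simp
    · intro x y hx hy ihx ihy
      show φ (⟨x, hx⟩ + ⟨y, hy⟩)
        = Ideal.Quotient.mk (edgeIdeal k (Ecyc n)) ((mkDerivation k p) (x + y))
      rw [map_add, ihx, ihy, map_add, map_add]
    · intro r x hx ih
      show φ (r • ⟨x, hx⟩)
        = Ideal.Quotient.mk (edgeIdeal k (Ecyc n)) ((mkDerivation k p) (r • x))
      have hx' : x ∈ edgeIdeal k (Ecyc n) := hx
      rw [map_smul, ih]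
      rw [show r • x = r * x from rfl, Derivation.leibniz, map_add]
      rw [show ((x : Rp k n) • (mkDerivation k p) r) = x * (mkDerivation k p) r from rfl]
      rw [Ideal.Quotient.eq_zero_iff_mem.mpr (Ideal.mul_mem_right _ _ hx'), add_zero]
      rw [show ((r : Rp k n) • (mkDerivation k p) x) = r * (mkDerivation k p) x from rfl]
      exact (mkq_smul r _).symm
  intro f
  obtain ⟨x, hx⟩ := f
  exact hgoal x hx

end Aux17


namespace Aux17

variable {k : Type*} [Field k] {n : ℕ}

open scoped Classical in
/-- divide the part of `f` divisible by the edge monomial `x_0 x_1` by it -/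
def divE (f : Rp k n) : Rp k n :=
  ∑ d ∈ f.support, if eE (0 : ZMod n) ≤ d then monomial (d - eE 0) (coeff d f) else 0

open scoped Classical in
lemma coeff_divE (f : Rp k n) (d : ZMod n →₀ ℕ) :
    coeff d (divE f) = coeff (d + eE 0) f := by
  have hkey : ∀ b : ZMod n →₀ ℕ, eE (0 : ZMod n) ≤ b → b - eE 0 = d → b = d + eE 0 := by
    intro b hb he
    rw [← he, tsub_add_cancel_of_le hb]
  set D : ZMod n →₀ ℕ := d + eE (0 : ZMod n) with hDdef
  have h1 : eE (0 : ZMod n) ≤ D := le_add_self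
  rw [divE, coeff_sum]
  rw [Finset.sum_eq_single D]
  · rw [if_pos h1, hDdef, add_tsub_cancel_right, coeff_monomial, if_pos rfl]
  · intro b _ hbd
    split_ifs with h
    · rw [coeff_monomial, if_neg (fun he => hbd (hkey b h he))]
    · simp
  · intro hd
    rw [notMem_support_iff] at hd
    rw [if_pos h1, hDdef, add_tsub_cancel_right, coeff_monomial, if_pos rfl, ← hDdef, hd]

lemma divE_add (f g : Rp k n) : divE (f + g) = divE f + divE g := by
  ext d
  rw [coeff_add, coeff_divE, coeff_divE, coeff_divE, coeff_add]

lemma divE_zero : divE (0 : Rp k n) = 0 := by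
  ext d
  rw [coeff_divE]
  simp

open scoped Classical in
lemma divE_monomial (t : ZMod n →₀ ℕ) (c : k) :
    divE (monomial t c : Rp k n) = if eE (0 : ZMod n) ≤ t then monomial (t - eE 0) c else 0 := by
  ext d
  rw [coeff_divE, coeff_monomial]
  by_cases h : t = d + eE 0
  · rw [if_pos h]
    have hle : eE (0 : ZMod n) ≤ t := h ▸ le_add_self
    rw [if_pos hle, coeff_monomial, if_pos (by rw [h, add_tsub_cancel_right])]
  · rw [if_neg h]
    symm
    split_ifs with h2
    · rw [coeff_monomial, if_neg (fun he => h (by rw [← he, tsub_add_cancel_of_le h2]))]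
    · simp

/-- the candidate nontrivial map at polynomial level -/
def Fop (lam : Rp k n) (f : Rp k n) : Rp k n := divE f * lam

lemma Fop_add (lam f g : Rp k n) : Fop lam (f + g) = Fop lam f + Fop lam g := by
  rw [Fop, Fop, Fop, divE_add, add_mul]

lemma Fop_smul_mem (lam : Rp k n)
    (hkeymono : ∀ (d : ZMod n →₀ ℕ) (c : k) (a b : ZMod n), Ecyc n a b →
      Fop lam (monomial d c * (X a * X b)) - monomial d c * Fop lam (X a * X b)
        ∈ edgeIdeal k (Ecyc n)) :
    ∀ f ∈ edgeIdeal k (Ecyc n), ∀ r,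
      Fop lam (r * f) - r * Fop lam f ∈ edgeIdeal k (Ecyc n) := by
  intro f hf
  let T : Ideal (Rp k n) :=
    { carrier := {f | ∀ r, Fop lam (r * f) - r * Fop lam f ∈ edgeIdeal k (Ecyc n)}
      zero_mem' := by
        intro r
        rw [mul_zero, show Fop lam (0 : Rp k n) = 0 from by rw [Fop, divE_zero, zero_mul]]
        rw [mul_zero, sub_zero]
        exact Ideal.zero_mem _
      add_mem' := by
        intro a b ha hb r
        have hc : Fop lam (r * (a + b)) - r * Fop lam (a + b)
            = (Fop lam (r * a) - r * Fop lam a) + (Fop lam (r * b) - r * Fop lam b) := by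
          rw [mul_add, Fop_add, Fop_add]
          ring
        rw [hc]
        exact Ideal.add_mem _ (ha r) (hb r)
      smul_mem' := by
        intro s f hf' r
        rw [smul_eq_mul]
        have hc : Fop lam (r * (s * f)) - r * Fop lam (s * f)
            = (Fop lam ((r * s) * f) - (r * s) * Fop lam f)
              - r * (Fop lam (s * f) - s * Fop lam f) := by
          rw [mul_assoc]
          ring
        rw [hc]
        exact Ideal.sub_mem _ (hf' (r * s)) (Ideal.mul_mem_left _ _ (hf' s)) }
  have hle : edgeIdeal k (Ecyc n) ≤ T := by
    rw [edgeIdeal, Ideal.span_le]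
    rintro m ⟨a, b, hab, rfl⟩
    intro r
    induction r using MvPolynomial.induction_on' with
    | monomial d c => exact hkeymono d c a b hab
    | add p q hp hq =>
      have hc : Fop lam ((p + q) * (X a * X b)) - (p + q) * Fop lam (X a * X b)
          = (Fop lam (p * (X a * X b)) - p * Fop lam (X a * X b))
            + (Fop lam (q * (X a * X b)) - q * Fop lam (X a * X b)) := by
        rw [add_mul, Fop_add]
        ring
      rw [hc]
      exact Ideal.add_mem _ hp hq
  exact fun r => hle hf r

lemma hFmon (lam : Rp k n) (t : ZMod n →₀ ℕ) (c : k) :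
    Fop lam (monomial (t + eE (0 : ZMod n)) c) = monomial t c * lam := by
  rw [Fop, divE_monomial, if_pos le_add_self, add_tsub_cancel_right]

lemma X01_eq : ((X (0 : ZMod n) : Rp k n) * X ((0 : ZMod n) + 1))
    = monomial (0 + eE (0 : ZMod n)) (1 : k) := by
  rw [X_mul_X, show (Finsupp.single (0 : ZMod n) 1 + Finsupp.single ((0 : ZMod n) + 1) 1)
    = 0 + eE (0 : ZMod n) from (zero_add _).symm]

lemma Fop_X01 (lam : Rp k n) :
    Fop lam ((X (0 : ZMod n) : Rp k n) * X ((0 : ZMod n) + 1)) = lam := by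
  rw [X01_eq, hFmon, monomial_zero', C_1, one_mul]

end Aux17


namespace Aux17

variable {k : Type*} [Field k] {n : ℕ}

set_option synthInstance.maxHeartbeats 1000000 in
set_option maxHeartbeats 1000000 in
lemma main_contra (lam : Rp k n)
    (hkeymono : ∀ (d : ZMod n →₀ ℕ) (c : k) (a b : ZMod n), Ecyc n a b →
      Fop lam (monomial d c * (X a * X b)) - monomial d c * Fop lam (X a * X b)
        ∈ edgeIdeal k (Ecyc n))
    (hrig : RigidEdgeIdeal k (Ecyc n)) :
    ∃ dd : Derivation k (Rp k n) (Rp k n), ∀ (a b : ZMod n), Ecyc n a b →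
      Ideal.Quotient.mk (edgeIdeal k (Ecyc n)) (Fop lam (X a * X b))
        = Ideal.Quotient.mk (edgeIdeal k (Ecyc n)) (dd (X a * X b)) := by
  have hT := Fop_smul_mem lam hkeymono
  set φ : (edgeIdeal k (Ecyc n)) →ₗ[Rp k n] (Rp k n ⧸ edgeIdeal k (Ecyc n)) :=
    { toFun := fun f => Ideal.Quotient.mk (edgeIdeal k (Ecyc n)) (Fop lam f.1)
      map_add' := by
        intro f g
        show Ideal.Quotient.mk (edgeIdeal k (Ecyc n))
            (Fop lam ((f + g : edgeIdeal k (Ecyc n)) : Rp k n))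
          = Ideal.Quotient.mk (edgeIdeal k (Ecyc n)) (Fop lam (f : Rp k n))
            + Ideal.Quotient.mk (edgeIdeal k (Ecyc n)) (Fop lam (g : Rp k n))
        rw [show ((f + g : edgeIdeal k (Ecyc n)) : Rp k n)
          = (f : Rp k n) + (g : Rp k n) from rfl, Fop_add]
        exact RingHom.map_add _ _ _
      map_smul' := by
        intro r f
        show Ideal.Quotient.mk (edgeIdeal k (Ecyc n))
            (Fop lam ((r • f : edgeIdeal k (Ecyc n)) : Rp k n))
          = r • Ideal.Quotient.mk (edgeIdeal k (Ecyc n)) (Fop lam (f : Rp k n))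
        rw [show ((r • f : edgeIdeal k (Ecyc n)) : Rp k n) = r * (f : Rp k n) from rfl]
        rw [show r • Ideal.Quotient.mk (edgeIdeal k (Ecyc n)) (Fop lam (f : Rp k n))
          = Ideal.Quotient.mk (edgeIdeal k (Ecyc n)) (r * Fop lam (f : Rp k n)) from rfl]
        rw [Ideal.Quotient.eq]
        exact hT (f : Rp k n) f.2 r } with hφ
  obtain ⟨dd, hdd⟩ := hrig φ
  refine ⟨dd, fun a b hab => ?_⟩
  have h := hdd (edgeGen k (Ecyc n) a b hab)
  rw [hφ] at h
  simp only [LinearMap.coe_mk, AddHom.coe_mk] at h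
  exact h

lemma Tapply (d0 : ZMod n →₀ ℕ) (j u v t : ZMod n) :
    ((d0 + (Finsupp.single j 1 + Finsupp.single (j + 1) 1) - eE 0
        + (Finsupp.single u 1 + Finsupp.single v 1)) : ZMod n →₀ ℕ) t
      = (d0 t + ((if j = t then 1 else 0) + (if j + 1 = t then 1 else 0))
          - ((if (0 : ZMod n) = t then 1 else 0) + (if (1 : ZMod n) = t then 1 else 0)))
        + ((if u = t then 1 else 0) + (if v = t then 1 else 0)) := by
  simp only [Finsupp.add_apply, Finsupp.tsub_apply, Finsupp.single_apply, eE_apply, zero_add]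

set_option maxHeartbeats 1000000 in
lemma nonrigidB (h5 : 5 ≤ n) (h6 : n ≠ 6) : ¬ RigidEdgeIdeal k (Ecyc n) := by
  intro hrig
  have hnz : ∀ m : ℕ, 0 < m → m < n → ((m : ℕ) : ZMod n) ≠ 0 := by
    intro m h0 hm h
    rw [ZMod.natCast_eq_zero_iff] at h
    have := Nat.le_of_dvd h0 h
    omega
  have z1 : (1 : ZMod n) ≠ 0 := by
    have := hnz 1 (by omega) (by omega); rwa [Nat.cast_one] at this
  have z2 : (2 : ZMod n) ≠ 0 := by
    have := hnz 2 (by omega) (by omega); rwa [Nat.cast_ofNat] at this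
  have z3 : (3 : ZMod n) ≠ 0 := by
    have := hnz 3 (by omega) (by omega); rwa [Nat.cast_ofNat] at this
  have z4 : (4 : ZMod n) ≠ 0 := by
    have := hnz 4 (by omega) (by omega); rwa [Nat.cast_ofNat] at this
  have z6 : (6 : ZMod n) ≠ 0 := by
    intro h
    have h' : ((6 : ℕ) : ZMod n) = 0 := by rwa [Nat.cast_ofNat]
    rw [ZMod.natCast_eq_zero_iff] at h'
    have hle6 := Nat.le_of_dvd (by norm_num) h'
    have hn56 : n = 5 ∨ n = 6 := by omega
    rcases hn56 with rfl | rfl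
    · norm_num at h'
    · exact h6 rfl
  have hkeyJ : ∀ (d : ZMod n →₀ ℕ) (c : k) (j : ZMod n),
      Fop (X 3 * X (-2)) (monomial d c * (X j * X (j + 1)))
        - monomial d c * Fop (X 3 * X (-2)) ((X j : Rp k n) * X (j + 1))
          ∈ edgeIdeal k (Ecyc n) := by
    intro d c j
    by_cases hj0 : j = 0
    · subst hj0
      rw [show (monomial d c : Rp k n) * (X 0 * X (0 + 1)) = monomial (d + eE 0) c from by
          rw [X_mul_X, monomial_mul, mul_one]
          rfl]
      rw [hFmon, Fop_X01, sub_self]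
      exact Ideal.zero_mem _
    · have hne : ¬ eE (0 : ZMod n) ≤ Finsupp.single j 1 + Finsupp.single (j + 1) 1 := by
        intro hle
        rw [le_eE_iff z1] at hle
        obtain ⟨ha, hb⟩ := hle
        rw [zero_add] at hb
        rw [Finsupp.add_apply, Finsupp.single_apply, Finsupp.single_apply] at ha hb
        have hja : j + 1 = 0 := by
          by_contra hc
          rw [if_neg hj0, if_neg hc] at ha
          omega
        have hjb : j = 1 := by
          by_contra hc
          rw [if_neg hc, if_neg (fun hcc : j + 1 = 1 => hj0 (by linear_combination hcc))] at hb
          omega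
        exact z2 (by linear_combination hja - hjb)
      have hFj : Fop (X 3 * X (-2)) ((X j : Rp k n) * X (j + 1)) = 0 := by
        rw [X_mul_X j (j + 1), Fop, divE_monomial, if_neg hne, zero_mul]
      rw [hFj, mul_zero, sub_zero]
      rw [show (monomial d c : Rp k n) * (X j * X (j + 1))
          = monomial (d + (Finsupp.single j 1 + Finsupp.single (j + 1) 1)) c from by
          rw [X_mul_X j (j + 1), monomial_mul, mul_one]]
      rw [Fop, divE_monomial]
      split_ifs with hle
      · rw [show ((X 3 : Rp k n) * X (-2))
            = monomial (Finsupp.single (3 : ZMod n) 1 + Finsupp.single (-2 : ZMod n) 1) 1 from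
            X_mul_X _ _]
        rw [monomial_mul, mul_one]
        by_cases hj1 : j = 1
        · subst hj1
          refine monomial_mem c (j := 2) ((le_eE_iff z1).mpr ⟨?_, ?_⟩)
          · rw [Tapply]
            rw [if_pos (show (1 : ZMod n) + 1 = 2 from by norm_num)]
            rw [if_neg (fun h : (0 : ZMod n) = 2 => z2 (by linear_combination -h))]
            rw [if_neg (fun h : (1 : ZMod n) = 2 => z1 (by linear_combination -h))]
            split_ifs <;> omega
          · rw [show (2 : ZMod n) + 1 = 3 from by norm_num, Tapply]
            rw [if_pos (rfl : (3 : ZMod n) = 3)]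
            split_ifs <;> omega
        · by_cases hjm1 : j = -1
          · subst hjm1
            refine monomial_mem c (j := -2) ((le_eE_iff z1).mpr ⟨?_, ?_⟩)
            · rw [Tapply]
              rw [if_pos (rfl : (-2 : ZMod n) = -2)]
              split_ifs <;> omega
            · rw [show (-2 : ZMod n) + 1 = -1 from by ring, Tapply]
              rw [if_pos (rfl : (-1 : ZMod n) = -1)]
              rw [if_neg (fun h : (0 : ZMod n) = -1 => z1 (by linear_combination h))]
              rw [if_neg (fun h : (1 : ZMod n) = -1 => z2 (by linear_combination h))]
              split_ifs <;> omega
          · refine monomial_mem c (j := j) ((le_eE_iff z1).mpr ⟨?_, ?_⟩)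
            · rw [Tapply]
              rw [if_pos (rfl : j = j)]
              rw [if_neg (fun h : (0 : ZMod n) = j => hj0 h.symm)]
              rw [if_neg (fun h : (1 : ZMod n) = j => hj1 h.symm)]
              split_ifs <;> omega
            · rw [Tapply]
              rw [if_pos (rfl : j + 1 = j + 1)]
              rw [if_neg (fun h : (0 : ZMod n) = j + 1 => hjm1 (by linear_combination -h))]
              rw [if_neg (fun h : (1 : ZMod n) = j + 1 => hj0 (by linear_combination -h))]
              split_ifs <;> omega
      · rw [zero_mul]
        exact Ideal.zero_mem _
  have hkeymono : ∀ (d : ZMod n →₀ ℕ) (c : k) (a b : ZMod n), Ecyc n a b →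
      Fop (X 3 * X (-2)) (monomial d c * (X a * X b))
        - monomial d c * Fop (X 3 * X (-2)) ((X a : Rp k n) * X b)
          ∈ edgeIdeal k (Ecyc n) := by
    intro d c a b hab
    rcases hab with h | h
    · subst h
      exact hkeyJ d c a
    · subst h
      rw [mul_comm (X (b + 1) : Rp k n) (X b)]
      exact hkeyJ d c b
  obtain ⟨dd, hdd⟩ := main_contra (X 3 * X (-2)) hkeymono hrig
  have h01 := hdd 0 (0 + 1) (Or.inl rfl)
  rw [Fop_X01] at h01
  rw [show dd ((X (0 : ZMod n) : Rp k n) * X ((0 : ZMod n) + 1))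
      = X 0 * dd (X ((0 : ZMod n) + 1)) + X ((0 : ZMod n) + 1) * dd (X 0) from by
      rw [Derivation.leibniz, smul_eq_mul, smul_eq_mul]] at h01
  rw [show ((0 : ZMod n) + 1) = 1 from zero_add 1] at h01
  have hmem := Ideal.Quotient.eq.mp h01.symm
  set μ : ZMod n →₀ ℕ := Finsupp.single (3 : ZMod n) 1 + Finsupp.single (-2 : ZMod n) 1 with hμ
  have hμ0 : μ (0 : ZMod n) = 0 := by
    rw [hμ, Finsupp.add_apply, Finsupp.single_apply, Finsupp.single_apply,
      if_neg (fun h : (3 : ZMod n) = 0 => z3 h),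
      if_neg (fun h : (-2 : ZMod n) = 0 => z2 (by linear_combination -h))]
    rfl
  have hμ1 : μ (1 : ZMod n) = 0 := by
    rw [hμ, Finsupp.add_apply, Finsupp.single_apply, Finsupp.single_apply,
      if_neg (fun h : (3 : ZMod n) = 1 => z2 (by linear_combination h)),
      if_neg (fun h : (-2 : ZMod n) = 1 => z3 (by linear_combination -h))]
    rfl
  have hstdμ : Std μ := by
    intro j hj
    rw [le_eE_iff z1] at hj
    obtain ⟨ha, hb⟩ := hj
    rw [hμ, Finsupp.add_apply, Finsupp.single_apply, Finsupp.single_apply] at ha hb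
    have hja : (3 : ZMod n) = j ∨ (-2 : ZMod n) = j := by
      by_contra hc
      push_neg at hc
      rw [if_neg hc.1, if_neg hc.2] at ha
      omega
    have hjb : (3 : ZMod n) = j + 1 ∨ (-2 : ZMod n) = j + 1 := by
      by_contra hc
      push_neg at hc
      rw [if_neg hc.1, if_neg hc.2] at hb
      omega
    rcases hja with h | h <;> rcases hjb with h' | h'
    · exact z1 (by linear_combination h - h')
    · exact z6 (by linear_combination h - h')
    · exact z4 (by linear_combination h' - h)
    · exact z1 (by linear_combination h - h')
  have h0 := coeff_std_zero hmem hstdμ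
  have hc1 : coeff μ ((X (0 : ZMod n) : Rp k n) * dd (X 1)) = 0 := coeff_X_mul_zero _ hμ0
  have hc2 : coeff μ ((X (1 : ZMod n) : Rp k n) * dd (X 0)) = 0 := coeff_X_mul_zero _ hμ1
  have hc3 : coeff μ ((X (3 : ZMod n) : Rp k n) * X (-2)) = 1 := by
    rw [X_mul_X, ← hμ, coeff_monomial, if_pos rfl]
  rw [coeff_sub, coeff_add, hc1, hc2, hc3] at h0
  norm_num at h0

end Aux17


namespace Aux17

variable {k : Type*} [Field k]

lemma Tapply1 {n : ℕ} (d0 : ZMod n →₀ ℕ) (j u t : ZMod n) :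
    ((d0 + (Finsupp.single j 1 + Finsupp.single (j + 1) 1) - eE 0
        + Finsupp.single u 1) : ZMod n →₀ ℕ) t
      = (d0 t + ((if j = t then 1 else 0) + (if j + 1 = t then 1 else 0))
          - ((if (0 : ZMod n) = t then 1 else 0) + (if (1 : ZMod n) = t then 1 else 0)))
        + (if u = t then 1 else 0) := by
  simp only [Finsupp.add_apply, Finsupp.tsub_apply, Finsupp.single_apply, eE_apply, zero_add]

set_option maxHeartbeats 1000000 in
lemma nonrigidA : ¬ RigidEdgeIdeal k (Ecyc 3) := by
  intro hrig
  have z1 : (1 : ZMod 3) ≠ 0 := by decide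
  have z2 : (2 : ZMod 3) ≠ 0 := by decide
  have hall : ∀ m : ZMod 3, m = 0 ∨ m = 1 ∨ m = 2 := by decide
  have hkeyJ : ∀ (d : ZMod 3 →₀ ℕ) (c : k) (j : ZMod 3),
      Fop (X 1) (monomial d c * (X j * X (j + 1)))
        - monomial d c * Fop (X 1) ((X j : Rp k 3) * X (j + 1))
          ∈ edgeIdeal k (Ecyc 3) := by
    intro d c j
    by_cases hj0 : j = 0
    · subst hj0
      rw [show (monomial d c : Rp k 3) * (X 0 * X (0 + 1)) = monomial (d + eE 0) c from by
          rw [X_mul_X, monomial_mul, mul_one]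
          rfl]
      rw [hFmon, Fop_X01, sub_self]
      exact Ideal.zero_mem _
    · have hne : ¬ eE (0 : ZMod 3) ≤ Finsupp.single j 1 + Finsupp.single (j + 1) 1 := by
        intro hle
        rw [le_eE_iff z1] at hle
        obtain ⟨ha, hb⟩ := hle
        rw [zero_add] at hb
        rw [Finsupp.add_apply, Finsupp.single_apply, Finsupp.single_apply] at ha hb
        have hja : j + 1 = 0 := by
          by_contra hc
          rw [if_neg hj0, if_neg hc] at ha
          omega
        have hjb : j = 1 := by
          by_contra hc
          rw [if_neg hc, if_neg (fun hcc : j + 1 = 1 => hj0 (by linear_combination hcc))] at hb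
          omega
        exact z2 (by linear_combination hja - hjb)
      have hFj : Fop (X 1) ((X j : Rp k 3) * X (j + 1)) = 0 := by
        rw [X_mul_X j (j + 1), Fop, divE_monomial, if_neg hne, zero_mul]
      rw [hFj, mul_zero, sub_zero]
      rw [show (monomial d c : Rp k 3) * (X j * X (j + 1))
          = monomial (d + (Finsupp.single j 1 + Finsupp.single (j + 1) 1)) c from by
          rw [X_mul_X j (j + 1), monomial_mul, mul_one]]
      rw [Fop, divE_monomial]
      split_ifs with hle
      · rw [show (X 1 : Rp k 3) = monomial (Finsupp.single (1 : ZMod 3) 1) 1 from rfl]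
        rw [monomial_mul, mul_one]
        rcases hall j with h | h | h
        · exact absurd h hj0
        · subst h
          refine monomial_mem c (j := 1) ((le_eE_iff z1).mpr ⟨?_, ?_⟩)
          · rw [Tapply1]
            rw [if_pos (rfl : (1 : ZMod 3) = 1)]
            rw [if_neg (show ¬ (1 : ZMod 3) + 1 = 1 from by decide)]
            rw [if_neg (show ¬ (0 : ZMod 3) = 1 from by decide)]
            omega
          · rw [Tapply1]
            rw [if_neg (show ¬ (1 : ZMod 3) = 1 + 1 from by decide)]
            rw [if_pos (rfl : (1 : ZMod 3) + 1 = 1 + 1)]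
            rw [if_neg (show ¬ (0 : ZMod 3) = 1 + 1 from by decide)]
            omega
        · subst h
          have hd1 : 1 ≤ d 1 := by
            rw [le_eE_iff z1] at hle
            obtain ⟨_, hb⟩ := hle
            rw [zero_add, Finsupp.add_apply, Finsupp.add_apply,
              Finsupp.single_apply, Finsupp.single_apply,
              if_neg (show ¬ (2 : ZMod 3) = 1 from by decide),
              if_neg (show ¬ (2 : ZMod 3) + 1 = 1 from by decide)] at hb
            omega
          refine monomial_mem c (j := 1) ((le_eE_iff z1).mpr ⟨?_, ?_⟩)
          · rw [Tapply1]
            rw [if_neg (show ¬ (2 : ZMod 3) = 1 from by decide)]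
            rw [if_neg (show ¬ (2 : ZMod 3) + 1 = 1 from by decide)]
            rw [if_neg (show ¬ (0 : ZMod 3) = 1 from by decide)]
            rw [if_pos (rfl : (1 : ZMod 3) = 1)]
            omega
          · rw [Tapply1]
            rw [if_pos (show (2 : ZMod 3) = 1 + 1 from by decide)]
            rw [if_neg (show ¬ (0 : ZMod 3) = 1 + 1 from by decide)]
            rw [if_neg (show ¬ (1 : ZMod 3) = 1 + 1 from by decide)]
            split_ifs <;> omega
      · rw [zero_mul]
        exact Ideal.zero_mem _
  have hkeymono : ∀ (d : ZMod 3 →₀ ℕ) (c : k) (a b : ZMod 3), Ecyc 3 a b →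
      Fop (X 1) (monomial d c * (X a * X b))
        - monomial d c * Fop (X 1) ((X a : Rp k 3) * X b) ∈ edgeIdeal k (Ecyc 3) := by
    intro d c a b hab
    rcases hab with h | h
    · subst h
      exact hkeyJ d c a
    · subst h
      rw [mul_comm (X (b + 1) : Rp k 3) (X b)]
      exact hkeyJ d c b
  obtain ⟨dd, hdd⟩ := main_contra (X 1 : Rp k 3) hkeymono hrig
  -- first generator
  have h01 := hdd 0 (0 + 1) (Or.inl rfl)
  rw [Fop_X01] at h01
  rw [show dd ((X (0 : ZMod 3) : Rp k 3) * X ((0 : ZMod 3) + 1))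
      = X 0 * dd (X ((0 : ZMod 3) + 1)) + X ((0 : ZMod 3) + 1) * dd (X 0) from by
      rw [Derivation.leibniz, smul_eq_mul, smul_eq_mul]] at h01
  rw [show ((0 : ZMod 3) + 1) = 1 from by decide] at h01
  have hmem1 := Ideal.Quotient.eq.mp h01.symm
  -- second generator
  have h20 := hdd 2 0 (Or.inl (by decide))
  have hF20 : Fop (X 1) ((X (2 : ZMod 3) : Rp k 3) * X 0) = 0 := by
    have hne : ¬ eE (0 : ZMod 3) ≤ Finsupp.single (2 : ZMod 3) 1 + Finsupp.single (0 : ZMod 3) 1 := by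
      intro hle
      rw [le_eE_iff z1] at hle
      obtain ⟨_, hb⟩ := hle
      rw [zero_add, Finsupp.add_apply, Finsupp.single_apply, Finsupp.single_apply,
        if_neg (show ¬ (2 : ZMod 3) = 1 from by decide),
        if_neg (show ¬ (0 : ZMod 3) = 1 from by decide)] at hb
      omega
    rw [X_mul_X 2 0, Fop, divE_monomial, if_neg hne, zero_mul]
  rw [hF20] at h20
  rw [show dd ((X (2 : ZMod 3) : Rp k 3) * X 0)
      = X 2 * dd (X 0) + X 0 * dd (X 2) from by
      rw [Derivation.leibniz, smul_eq_mul, smul_eq_mul]] at h20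
  have hmem2 : (X (2 : ZMod 3) : Rp k 3) * dd (X 0) + X 0 * dd (X 2)
      ∈ edgeIdeal k (Ecyc 3) := by
    have := Ideal.Quotient.eq.mp h20.symm
    rwa [sub_zero] at this
  -- Std of single coordinates
  have hstdsing : ∀ c0 : ZMod 3, Std ((0 : ZMod 3 →₀ ℕ) + sE c0) := by
    intro c0 j hj
    rw [zero_add] at hj
    rw [le_eE_iff z1] at hj
    obtain ⟨ha, hb⟩ := hj
    rw [sE_apply] at ha hb
    have h1 : c0 = j := by
      by_contra hc
      rw [if_neg hc] at ha
      omega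
    have h2 : c0 = j + 1 := by
      by_contra hc
      rw [if_neg hc] at hb
      omega
    rw [← h1] at h2
    exact z1 (by linear_combination -h2)
  -- coefficient extraction from hmem1 at 0 + sE 1
  have e00 : (((0 : ZMod 3 →₀ ℕ) + sE 1 : ZMod 3 →₀ ℕ)) 0 = 0 := by
    rw [zero_add, sE_apply, if_neg (show ¬ (1 : ZMod 3) = 0 from by decide)]
  have e20 : (((0 : ZMod 3 →₀ ℕ) + sE 2 : ZMod 3 →₀ ℕ)) 0 = 0 := by
    rw [zero_add, sE_apply, if_neg (show ¬ (2 : ZMod 3) = 0 from by decide)]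
  have h0 := coeff_std_zero hmem1 (hstdsing 1)
  rw [coeff_sub, coeff_add,
    coeff_X_mul_zero _ e00, coeff_X_mul_self 1 (dd (X 0)) 0,
    show coeff ((0 : ZMod 3 →₀ ℕ) + sE 1) (X 1 : Rp k 3) = 1 from by
      rw [show (X 1 : Rp k 3) = monomial (Finsupp.single (1 : ZMod 3) 1) 1 from rfl,
        coeff_monomial, if_pos (show Finsupp.single (1 : ZMod 3) 1 = 0 + sE 1 from
          (zero_add _).symm)]] at h0
  have hco : coeff 0 (dd (X (0 : ZMod 3))) = 1 := by linear_combination h0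
  have h0' := coeff_std_zero hmem2 (hstdsing 2)
  rw [coeff_add, coeff_X_mul_self 2 (dd (X 0)) 0, coeff_X_mul_zero _ e20, add_zero, hco] at h0'
  exact one_ne_zero h0' 

end Aux17


/-- For `n ≥ 3`, the cycle `C_n` is algebraically rigid — `δ*` is
surjective onto `Hom_R(I(C_n), R/I(C_n))`, i.e. `T¹(R/I(C_n)) = 0` — iff `n = 4` or
`n = 6`. -/
theorem statement17 {k : Type*} [Field k] (n : ℕ) (hn : 3 ≤ n) :
    RigidEdgeIdeal k (fun i j : ZMod n => j = i + 1 ∨ i = j + 1) ↔ (n = 4 ∨ n = 6) := by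
  show RigidEdgeIdeal k (Aux17.Ecyc n) ↔ (n = 4 ∨ n = 6)
  constructor
  · intro hrig
    by_contra hc
    push_neg at hc
    obtain ⟨h4, h6⟩ := hc
    have hcase : n = 3 ∨ 5 ≤ n := by omega
    rcases hcase with rfl | h5
    · exact Aux17.nonrigidA hrig
    · exact Aux17.nonrigidB h5 h6 hrig
  · exact Aux17.rigid46

end
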